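/- For any two-qubit density matrix ρ with normalized linear entropy S_L(ρ) = (4/3)(1-tr ρ²) > 2/3, one has m(ρ) ≤ 1, i.e. ρ satisfies all CHSH inequalities. -/

import Mathlib

open Matrix Kronecker Complex ComplexOrder

noncomputable section
open scoped Classical

/-- Pauli matrices. -/
def pauli : Fin 3 → Matrix (Fin 2) (Fin 2) ℂ
  | 0 => !![0, 1; 1, 0]
  | 1 => !![0, -Complex.I; Complex.I, 0]
  | 2 => !![1, 0; 0, -1]

/-- Kronecker product of two one-qubit operators, reindexed to a 4×4 matrix. -/
def kron4 (A B : Matrix (Fin 2) (Fin 2) ℂ) : Matrix (Fin 4) (Fin 4) ℂ :=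
  Matrix.reindex finProdFinEquiv finProdFinEquiv (A ⊗ₖ B)

/-- A density matrix: positive semidefinite with unit trace. -/
def IsDensity {n : ℕ} (ρ : Matrix (Fin n) (Fin n) ℂ) : Prop :=
  ρ.PosSemidef ∧ ρ.trace = 1

/-- The spin-flipped matrix ρ̃ = (σ₂⊗σ₂) ρ̄ (σ₂⊗σ₂). -/
def tildeMat (ρ : Matrix (Fin 4) (Fin 4) ℂ) : Matrix (Fin 4) (Fin 4) ℂ :=
  kron4 (pauli 1) (pauli 1) * ρ.map (starRingEnd ℂ) * kron4 (pauli 1) (pauli 1)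

/-- Positive square root of a positive semidefinite matrix (0 otherwise). -/
def msqrt {n : ℕ} (A : Matrix (Fin n) (Fin n) ℂ) : Matrix (Fin n) (Fin n) ℂ :=
  if h : A.PosSemidef then
    (h.1.eigenvectorUnitary : Matrix (Fin n) (Fin n) ℂ) *
      diagonal (fun i => ((Real.sqrt (h.1.eigenvalues i) : ℝ) : ℂ)) *
      (star h.1.eigenvectorUnitary : Matrix (Fin n) (Fin n) ℂ)
  else 0

/-- ρ̂ = √(√ρ ρ̃ √ρ). -/
def hatMat (ρ : Matrix (Fin 4) (Fin 4) ℂ) : Matrix (Fin 4) (Fin 4) ℂ :=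
  msqrt (msqrt ρ * tildeMat ρ * msqrt ρ)

/-- Eigenvalues of a Hermitian matrix (0 otherwise). -/
def evalsC {n : ℕ} (A : Matrix (Fin n) (Fin n) ℂ) : Fin n → ℝ :=
  if h : A.IsHermitian then h.eigenvalues else 0

/-- The concurrence C(ρ) = max(0, 2 λ_max(ρ̂) − tr ρ̂). -/
def concurrence (ρ : Matrix (Fin 4) (Fin 4) ℂ) : ℝ :=
  max 0 (2 * (⨆ i, evalsC (hatMat ρ) i) - ∑ i, evalsC (hatMat ρ) i)

/-- Correlation matrix T_ρ with entries tr(ρ σₙ⊗σₘ). -/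
def Tmat (ρ : Matrix (Fin 4) (Fin 4) ℂ) : Matrix (Fin 3) (Fin 3) ℝ :=
  fun n m => ((ρ * kron4 (pauli n) (pauli m)).trace).re

/-- U_ρ = T_ρᵀ T_ρ. -/
def Umat (ρ : Matrix (Fin 4) (Fin 4) ℂ) : Matrix (Fin 3) (Fin 3) ℝ :=
  (Tmat ρ)ᵀ * Tmat ρ

/-- Eigenvalues of a real symmetric matrix (0 otherwise). -/
def evalsR {n : ℕ} (A : Matrix (Fin n) (Fin n) ℝ) : Fin n → ℝ :=
  if h : A.IsHermitian then h.eigenvalues else 0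

/-- The Horodecki quantity m(ρ) = max_{j<k} (u_j + u_k). -/
def mval (ρ : Matrix (Fin 4) (Fin 4) ℂ) : ℝ :=
  (Finset.univ.filter (fun p : Fin 3 × Fin 3 => p.1 < p.2)).sup'
    (by decide) (fun p => evalsR (Umat ρ) p.1 + evalsR (Umat ρ) p.2)

/-- Normalized linear entropy S_L(ρ) = (4/3)(1 − tr ρ²). -/
def linEntropy (ρ : Matrix (Fin 4) (Fin 4) ℂ) : ℝ :=
  (4/3) * (1 - ((ρ * ρ).trace).re)

/-- The class E₀ state with parameters a, b, c, θ. -/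
def rhoE0 (a b c θ : ℝ) : Matrix (Fin 4) (Fin 4) ℂ :=
  !![0, 0, 0, 0;
     0, (a : ℂ), (c/2 : ℂ) * Complex.exp (θ * Complex.I), 0;
     0, (c/2 : ℂ) * Complex.exp (-θ * Complex.I), (b : ℂ), 0;
     0, 0, 0, ((1 - a - b : ℝ) : ℂ)]

/-- The maximal-CHSH-violation states ρ_MVB. -/
def rhoMVB (β θ : ℝ) : Matrix (Fin 4) (Fin 4) ℂ :=
  rhoE0 (1/2) (1/2) (Real.sqrt (β - 1)) θ

lemma kron4_00 : kron4 (pauli 0) (pauli 0) = !![0, 0, 0, 1; 0, 0, 1, 0; 0, 1, 0, 0; 1, 0, 0, 0] := by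
  ext i j
  fin_cases i <;> fin_cases j <;>
    simp [kron4, pauli, finProdFinEquiv, Matrix.kroneckerMap_apply, Fin.divNat, Fin.modNat] <;>
    norm_num [show ((3:Fin 4):ℕ)=3 from rfl, Matrix.vecHead, Matrix.vecTail]
lemma kron4_01 : kron4 (pauli 0) (pauli 1) = !![0, 0, 0, -Complex.I; 0, 0, Complex.I, 0; 0, -Complex.I, 0, 0; Complex.I, 0, 0, 0] := by
  ext i j
  fin_cases i <;> fin_cases j <;>
    simp [kron4, pauli, finProdFinEquiv, Matrix.kroneckerMap_apply, Fin.divNat, Fin.modNat] <;>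
    norm_num [show ((3:Fin 4):ℕ)=3 from rfl, Matrix.vecHead, Matrix.vecTail]
lemma kron4_02 : kron4 (pauli 0) (pauli 2) = !![0, 0, 1, 0; 0, 0, 0, -1; 1, 0, 0, 0; 0, -1, 0, 0] := by
  ext i j
  fin_cases i <;> fin_cases j <;>
    simp [kron4, pauli, finProdFinEquiv, Matrix.kroneckerMap_apply, Fin.divNat, Fin.modNat] <;>
    norm_num [show ((3:Fin 4):ℕ)=3 from rfl, Matrix.vecHead, Matrix.vecTail]
lemma kron4_10 : kron4 (pauli 1) (pauli 0) = !![0, 0, 0, -Complex.I; 0, 0, -Complex.I, 0; 0, Complex.I, 0, 0; Complex.I, 0, 0, 0] := by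
  ext i j
  fin_cases i <;> fin_cases j <;>
    simp [kron4, pauli, finProdFinEquiv, Matrix.kroneckerMap_apply, Fin.divNat, Fin.modNat] <;>
    norm_num [show ((3:Fin 4):ℕ)=3 from rfl, Matrix.vecHead, Matrix.vecTail]
lemma kron4_11 : kron4 (pauli 1) (pauli 1) = !![0, 0, 0, -1; 0, 0, 1, 0; 0, 1, 0, 0; -1, 0, 0, 0] := by
  ext i j
  fin_cases i <;> fin_cases j <;>
    simp [kron4, pauli, finProdFinEquiv, Matrix.kroneckerMap_apply, Fin.divNat, Fin.modNat] <;>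
    norm_num [show ((3:Fin 4):ℕ)=3 from rfl, Matrix.vecHead, Matrix.vecTail]
lemma kron4_12 : kron4 (pauli 1) (pauli 2) = !![0, 0, -Complex.I, 0; 0, 0, 0, Complex.I; Complex.I, 0, 0, 0; 0, -Complex.I, 0, 0] := by
  ext i j
  fin_cases i <;> fin_cases j <;>
    simp [kron4, pauli, finProdFinEquiv, Matrix.kroneckerMap_apply, Fin.divNat, Fin.modNat] <;>
    norm_num [show ((3:Fin 4):ℕ)=3 from rfl, Matrix.vecHead, Matrix.vecTail]
lemma kron4_20 : kron4 (pauli 2) (pauli 0) = !![0, 1, 0, 0; 1, 0, 0, 0; 0, 0, 0, -1; 0, 0, -1, 0] := by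
  ext i j
  fin_cases i <;> fin_cases j <;>
    simp [kron4, pauli, finProdFinEquiv, Matrix.kroneckerMap_apply, Fin.divNat, Fin.modNat] <;>
    norm_num [show ((3:Fin 4):ℕ)=3 from rfl, Matrix.vecHead, Matrix.vecTail]
lemma kron4_21 : kron4 (pauli 2) (pauli 1) = !![0, -Complex.I, 0, 0; Complex.I, 0, 0, 0; 0, 0, 0, Complex.I; 0, 0, -Complex.I, 0] := by
  ext i j
  fin_cases i <;> fin_cases j <;>
    simp [kron4, pauli, finProdFinEquiv, Matrix.kroneckerMap_apply, Fin.divNat, Fin.modNat] <;>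
    norm_num [show ((3:Fin 4):ℕ)=3 from rfl, Matrix.vecHead, Matrix.vecTail]
lemma kron4_22 : kron4 (pauli 2) (pauli 2) = !![1, 0, 0, 0; 0, -1, 0, 0; 0, 0, -1, 0; 0, 0, 0, 1] := by
  ext i j
  fin_cases i <;> fin_cases j <;>
    simp [kron4, pauli, finProdFinEquiv, Matrix.kroneckerMap_apply, Fin.divNat, Fin.modNat] <;>
    norm_num [show ((3:Fin 4):ℕ)=3 from rfl, Matrix.vecHead, Matrix.vecTail]

lemma trace_eq_sum_evalsR {n : ℕ} (A : Matrix (Fin n) (Fin n) ℝ) (hA : A.IsHermitian) :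
    A.trace = ∑ i, hA.eigenvalues i := by
  rw [hA.trace_eq_sum_eigenvalues]
  simp

set_option maxHeartbeats 2000000 in
lemma key_ineq (ρ : Matrix (Fin 4) (Fin 4) ℂ) (hH : ρ.IsHermitian) (htr : ρ.trace = 1) :
    ∑ n : Fin 3, ∑ m : Fin 3, (Tmat ρ n m)^2 ≤ 4 * ((ρ * ρ).trace).re - 1 := by
  have happ : ∀ i j, ρ j i = (starRingEnd ℂ) (ρ i j) := by
    intro i j; rw [← hH.apply i j]; simp
  have him : ∀ i, (ρ i i).im = 0 := by
    intro i
    have := congrArg Complex.im (happ i i)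
    simp at this
    linarith
  have htr' : (ρ 0 0).re + (ρ 1 1).re + (ρ 2 2).re + (ρ 3 3).re = 1 := by
    have := congrArg Complex.re htr
    simpa [Matrix.trace, Matrix.diag, Fin.sum_univ_four] using this
  have h10 := happ 0 1
  have h20 := happ 0 2
  have h30 := happ 0 3
  have h21 := happ 1 2
  have h31 := happ 1 3
  have h32 := happ 2 3
  simp only [Fin.sum_univ_three, Tmat, kron4_00, kron4_01, kron4_02, kron4_10,
    kron4_11, kron4_12, kron4_20, kron4_21, kron4_22]
  simp only [Matrix.trace, Matrix.diag, Matrix.mul_apply, Fin.sum_univ_four]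
  rw [h10, h20, h30, h21, h31, h32]
  simp [Complex.add_re, Complex.mul_re, Complex.mul_im, Complex.add_im,
    Matrix.vecHead, Matrix.vecTail]
  have hsq : ((ρ 0 0).re + (ρ 1 1).re + (ρ 2 2).re + (ρ 3 3).re)^2 = 1 := by
    rw [htr']; norm_num
  have hi0 : (ρ 0 0).im * (ρ 0 0).im = 0 := by rw [him 0]; ring
  have hi1 : (ρ 1 1).im * (ρ 1 1).im = 0 := by rw [him 1]; ring
  have hi2 : (ρ 2 2).im * (ρ 2 2).im = 0 := by rw [him 2]; ring
  have hi3 : (ρ 3 3).im * (ρ 3 3).im = 0 := by rw [him 3]; ring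
  nlinarith [sq_nonneg ((ρ 0 2).re + (ρ 1 3).re), sq_nonneg ((ρ 0 2).im + (ρ 1 3).im),
    sq_nonneg ((ρ 0 0).re + (ρ 1 1).re - (ρ 2 2).re - (ρ 3 3).re),
    sq_nonneg ((ρ 0 1).re + (ρ 2 3).re), sq_nonneg ((ρ 0 1).im + (ρ 2 3).im),
    sq_nonneg ((ρ 0 0).re - (ρ 1 1).re + (ρ 2 2).re - (ρ 3 3).re),
    hsq, hi0, hi1, hi2, hi3]

/-- Santos bound: S_L(ρ) > 2/3 implies m(ρ) ≤ 1. -/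
theorem mval_le_one_of_linEntropy (ρ : Matrix (Fin 4) (Fin 4) ℂ)
    (hρ : IsDensity ρ) (hs : 2/3 < linEntropy ρ) : mval ρ ≤ 1 := by
  obtain ⟨hpsd, htr⟩ := hρ
  have hH : ρ.IsHermitian := hpsd.1
  have htr2 : ((ρ * ρ).trace).re < 1/2 := by
    unfold linEntropy at hs; linarith
  have hUpsd : (Umat ρ).PosSemidef := by
    have : Umat ρ = (Tmat ρ)ᴴ * (Tmat ρ) := by
      rw [Matrix.conjTranspose_eq_transpose_of_trivial]; rfl
    rw [this]
    exact Matrix.posSemidef_conjTranspose_mul_self _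
  have hUH : (Umat ρ).IsHermitian := hUpsd.1
  have hev : evalsR (Umat ρ) = hUH.eigenvalues := by
    rw [evalsR, dif_pos hUH]
  have hnonneg : ∀ i, 0 ≤ evalsR (Umat ρ) i := by
    intro i; rw [hev]; exact hUpsd.eigenvalues_nonneg i
  have hsum : ∑ i, evalsR (Umat ρ) i = (Umat ρ).trace := by
    rw [hev, (trace_eq_sum_evalsR _ hUH)]
  have htrU : (Umat ρ).trace = ∑ n : Fin 3, ∑ m : Fin 3, (Tmat ρ m n)^2 := by
    simp [Umat, Matrix.trace, Matrix.diag, Matrix.mul_apply, Matrix.transpose_apply, sq]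
  have hkey : (Umat ρ).trace ≤ 1 := by
    rw [htrU]
    have := key_ineq ρ hH htr
    rw [Finset.sum_comm] at this
    linarith
  apply Finset.sup'_le
  intro p hp
  simp only [Finset.mem_filter] at hp
  have hple : evalsR (Umat ρ) p.1 + evalsR (Umat ρ) p.2 ≤ ∑ i, evalsR (Umat ρ) i := by
    have h12 : p.1 ≠ p.2 := ne_of_lt hp.2
    rw [Fin.sum_univ_three]
    fin_cases p <;> simp_all <;> linarith [hnonneg 0, hnonneg 1, hnonneg 2]
  calc evalsR (Umat ρ) p.1 + evalsR (Umat ρ) p.2 ≤ ∑ i, evalsR (Umat ρ) i := hple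
    _ = (Umat ρ).trace := hsum
    _ ≤ 1 := hkey

end
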